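/- arXiv:2511.22979 — 2 statements merged into one kernel-verified Lean document; each statement's English description precedes it below -/
import Mathlib

section
/- Let β = p/q > 2 with p, q coprime positive integers, and let t = c/d be rational. If t has an eventually periodic representation in base β with digits 0 and 1, then every gap in the greedy exploration of t is a rational number of the form x/d with integer numerator x satisfying 0 ≤ x ≤ d/(β−1); consequently there are at most ⌊d/(β−1)⌋ + 1 distinct gaps, and the representation has the form u·v^ω with |u| + |v| ≤ d. -/
set_option maxHeartbeats 1600000

/-- The eventually periodic word u·v^ω as a function ℕ → ℚ (index i is position i+1). -/
def upWordQ (u v : List ℚ) : ℕ → ℚ :=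
  fun i => if i < u.length then u.getD i 0 else v.getD ((i - u.length) % v.length) 0

lemma getD_zero_or_one (l : List ℚ) (h : ∀ a ∈ l, a = 0 ∨ a = 1) (n : ℕ) :
    l.getD n 0 = 0 ∨ l.getD n 0 = 1 := by
  by_cases hn : n < l.length
  · rw [List.getD_eq_getElem _ _ hn]; exact h _ (List.getElem_mem hn)
  · left; exact List.getD_eq_default _ _ (le_of_not_gt hn)

lemma int_of_coprime_mul (a b : ℤ) (h : IsCoprime a b) (x : ℚ) (y z : ℤ)
    (hy : (y:ℚ) = a * x) (hz : (z:ℚ) = b * x) : ∃ w : ℤ, (w:ℚ) = x := by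
  obtain ⟨u, v, huv⟩ := h
  refine ⟨u*y + v*z, ?_⟩
  have h1 : ((u*a + v*b : ℤ) : ℚ) = 1 := by exact_mod_cast congrArg (fun i : ℤ => (i:ℚ)) huv
  push_cast at h1 ⊢
  calc (u:ℚ)*y + v*z = (u*a + v*b) * x := by rw [hy, hz]; ring
  _ = x := by rw [h1]; ring

/-- If t = c/d has an eventually periodic {0,1}-representation in base β = p/q > 2, then
all greedy gaps are of the form x/d with 0 ≤ x ≤ d/(β-1), there are at most
⌊d/(β-1)⌋ + 1 distinct gaps, and there is a representation u·v^ω with |u| + |v| ≤ d. -/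
theorem eventually_periodic_gap_structure (p q : ℕ) (hp : 0 < p) (hq : 0 < q)
    (hcop : Nat.Coprime p q) (hβ : 2 < (p : ℚ) / q)
    (c : ℤ) (d : ℕ) (hd : 0 < d) (t : ℚ) (ht : t = (c : ℚ) / d)
    (g : ℕ → ℚ) (hg0 : g 0 = t)
    (hrec : ∀ n, g (n + 1) = ((p : ℚ) / q) * g n - (if 1 ≤ ((p : ℚ) / q) * g n then 1 else 0))
    (hper : ∃ u v : List ℚ, (∀ a ∈ u, a = 0 ∨ a = 1) ∧ (∀ a ∈ v, a = 0 ∨ a = 1) ∧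
      v ≠ [] ∧ ∑' i : ℕ, (upWordQ u v i : ℝ) * ((q : ℝ) / p) ^ (i + 1) = (t : ℝ)) :
    (∀ n, ∃ x : ℤ, g n = (x : ℚ) / d ∧ 0 ≤ x ∧ (x : ℚ) ≤ (d : ℚ) / ((p : ℚ) / q - 1)) ∧
    (Set.range g).Finite ∧ (Set.range g).ncard ≤ ⌊(d : ℚ) / ((p : ℚ) / q - 1)⌋.toNat + 1 ∧
    (∃ u v : List ℚ, (∀ a ∈ u, a = 0 ∨ a = 1) ∧ (∀ a ∈ v, a = 0 ∨ a = 1) ∧ v ≠ [] ∧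
      u.length + v.length ≤ d ∧
      ∑' i : ℕ, (upWordQ u v i : ℝ) * ((q : ℝ) / p) ^ (i + 1) = (t : ℝ)) := by
  obtain ⟨u, v, hu, hv, hvne, htsum⟩ := hper
  set w : ℕ → ℚ := upWordQ u v with hwdef
  have hw01 : ∀ n, w n = 0 ∨ w n = 1 := by
    intro n
    show (if n < u.length then u.getD n 0 else v.getD ((n - u.length) % v.length) 0) = 0 ∨
      (if n < u.length then u.getD n 0 else v.getD ((n - u.length) % v.length) 0) = 1
    by_cases h : n < u.length
    · simp only [if_pos h]; exact getD_zero_or_one u hu n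
    · simp only [if_neg h]; exact getD_zero_or_one v hv _
  have hq0Q : ((q:ℚ)) ≠ 0 := Nat.cast_ne_zero.mpr hq.ne'
  have h2q : 2*(q:ℚ) < p := by
    rw [lt_div_iff₀ (by exact_mod_cast hq : (0:ℚ) < q)] at hβ; linarith
  have h2qR : 2*(q:ℝ) < p := by exact_mod_cast h2q
  set γ : ℝ := (q:ℝ)/p with hγdef
  have hp0 : (0:ℝ) < p := by exact_mod_cast hp
  have hq0 : (0:ℝ) < q := by exact_mod_cast hq
  have hγ0 : 0 < γ := by positivity
  have hγh : γ < 1/2 := by rw [hγdef, div_lt_iff₀ hp0]; linarith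
  have hγ1 : γ < 1 := by linarith
  have hwR : ∀ n, (0:ℝ) ≤ (w n : ℝ) ∧ (w n : ℝ) ≤ 1 := by
    intro n; rcases hw01 n with h | h <;> rw [h] <;> norm_num
  have hgsum : Summable (fun i : ℕ => γ^i * γ) :=
    (summable_geometric_of_lt_one hγ0.le hγ1).mul_right γ
  have hnn : ∀ n i, (0:ℝ) ≤ (w (n+i):ℝ) * γ^(i+1) := fun n i =>
    mul_nonneg (hwR _).1 (pow_nonneg hγ0.le _)
  have hbd : ∀ n i, (w (n+i):ℝ) * γ^(i+1) ≤ γ^i * γ := by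
    intro n i
    rw [← pow_succ]
    exact mul_le_of_le_one_left (pow_nonneg hγ0.le _) (hwR _).2
  have hsummable : ∀ n, Summable (fun i => (w (n+i):ℝ) * γ^(i+1)) := fun n =>
    Summable.of_nonneg_of_le (hnn n) (hbd n) hgsum
  set s : ℕ → ℝ := fun n => ∑' i, (w (n+i):ℝ) * γ^(i+1) with hsdef
  have hs_nonneg : ∀ n, 0 ≤ s n := fun n => tsum_nonneg (hnn n)
  have hgeo : ∑' i:ℕ, γ^i * γ = (1-γ)⁻¹ * γ := by
    rw [tsum_mul_right, tsum_geometric_of_lt_one hγ0.le hγ1]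
  have hs_le : ∀ n, s n ≤ (1-γ)⁻¹ * γ := fun n =>
    hgeo ▸ Summable.tsum_le_tsum (hbd n) (hsummable n) hgsum
  have hlt1 : (1-γ)⁻¹ * γ < 1 := by
    rw [inv_mul_lt_iff₀ (by linarith : (0:ℝ) < 1 - γ)]; linarith
  have hshift : ∀ n, s n = γ * ((w n : ℝ) + s (n+1)) := by
    intro n
    have h1 := Summable.tsum_eq_zero_add (hsummable n)
    have h2 : ∑' i, (w (n+(i+1)):ℝ) * γ^((i+1)+1) = (∑' i, (w ((n+1)+i):ℝ) * γ^(i+1)) * γ := by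
      rw [← tsum_mul_right]
      apply tsum_congr
      intro i
      have e : n + (i+1) = (n+1) + i := by omega
      rw [e, pow_succ]
      ring
    rw [hsdef]
    simp only []
    rw [h1, h2]
    simp only [Nat.add_zero, pow_one]
    ring
  have hβs : ∀ n, ((p:ℝ)/q) * s n = (w n : ℝ) + s (n+1) := by
    intro n
    rw [hshift n, hγdef]
    field_simp
  have hstep : ∀ n, (g n:ℝ) = s n →
      ((if 1 ≤ ((p:ℚ)/q) * g n then (1:ℚ) else 0) = w n ∧ (g (n+1):ℝ) = s (n+1)) := by
    intro n hn
    have hcast : ((((p:ℚ)/q) * g n : ℚ) : ℝ) = (p:ℝ)/q * s n := by push_cast [hn]; ring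
    rcases hw01 n with h0 | h1
    · have hval : (p:ℝ)/q * s n = s (n+1) := by
        rw [hβs n, h0]; push_cast; ring
      have hltR : ((((p:ℚ)/q) * g n : ℚ) : ℝ) < 1 := by
        rw [hcast, hval]; exact lt_of_le_of_lt (hs_le (n+1)) hlt1
      have hlt : ((p:ℚ)/q) * g n < 1 := by exact_mod_cast hltR
      have hif : (if 1 ≤ ((p:ℚ)/q) * g n then (1:ℚ) else 0) = 0 := if_neg (not_le.2 hlt)
      refine ⟨hif.trans h0.symm, ?_⟩
      have he : (g (n+1) : ℝ) = ((((p:ℚ)/q) * g n - 0 : ℚ) : ℝ) := by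
        rw [hrec n, hif]
      rw [he]; push_cast
      rw [hn]
      have hb := hβs n
      rw [h0] at hb; push_cast at hb
      linarith
    · have hval : (p:ℝ)/q * s n = 1 + s (n+1) := by
        rw [hβs n, h1]; push_cast; ring
      have hgeR : (1:ℝ) ≤ ((((p:ℚ)/q) * g n : ℚ) : ℝ) := by
        rw [hcast, hval]; linarith [hs_nonneg (n+1)]
      have hge : (1:ℚ) ≤ ((p:ℚ)/q) * g n := by exact_mod_cast hgeR
      have hif : (if 1 ≤ ((p:ℚ)/q) * g n then (1:ℚ) else 0) = 1 := if_pos hge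
      refine ⟨hif.trans h1.symm, ?_⟩
      have he : (g (n+1) : ℝ) = ((((p:ℚ)/q) * g n - 1 : ℚ) : ℝ) := by
        rw [hrec n, hif]
      rw [he]; push_cast
      rw [hn]
      have hb := hβs n
      rw [h1] at hb; push_cast at hb
      linarith
  have hgs : ∀ n, (g n:ℝ) = s n := by
    intro n
    induction n with
    | zero =>
      rw [hg0, hsdef]
      simp only []
      rw [← htsum]
      exact (tsum_congr (fun i => by rw [Nat.zero_add])).symm
    | succ n ih => exact (hstep n ih).2
  have hdig : ∀ n, (if 1 ≤ ((p:ℚ)/q) * g n then (1:ℚ) else 0) = w n :=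
    fun n => (hstep n (hgs n)).1
  have hrec' : ∀ n, g (n+1) = ((p:ℚ)/q) * g n - w n := by
    intro n; rw [hrec n, hdig n]
  -- eventual periodicity of g
  set N := u.length with hN
  set L := v.length with hLdef
  have hL : 0 < L := List.length_pos_iff.2 hvne
  have hwper : ∀ n, N ≤ n → w (n + L) = w n := by
    intro n hn
    show (if n + L < u.length then u.getD (n+L) 0 else v.getD ((n + L - u.length) % v.length) 0)
        = (if n < u.length then u.getD n 0 else v.getD ((n - u.length) % v.length) 0)
    rw [if_neg (by omega), if_neg (by omega)]
    have e : n + L - u.length = (n - u.length) + v.length := by omega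
    rw [e, Nat.add_mod_right]
  have hsper : ∀ n, N ≤ n → s (n + L) = s n := by
    intro n hn
    apply tsum_congr
    intro i
    have e : n + L + i = (n + i) + L := by omega
    rw [e, hwper (n+i) (by omega)]
  have hgper : ∀ n, N ≤ n → g (n + L) = g n := by
    intro n hn
    have := (hgs (n+L)).trans ((hsper n hn).trans (hgs n).symm)
    exact_mod_cast this
  -- integrality
  have hd0 : ((d:ℚ)) ≠ 0 := Nat.cast_ne_zero.mpr hd.ne'
  have fwd : ∀ n, ∃ y : ℤ, (y:ℚ) = (d:ℚ) * (q:ℚ)^n * g n := by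
    intro n
    induction n with
    | zero =>
      refine ⟨c, ?_⟩
      rw [hg0, ht]
      field_simp
    | succ n ih =>
      obtain ⟨y, hy⟩ := ih
      have key : (d:ℚ) * (q:ℚ)^(n+1) * g (n+1)
          = p * ((d:ℚ) * (q:ℚ)^n * g n) - (d:ℚ) * (q:ℚ)^(n+1) * w n := by
        rw [hrec' n]; field_simp; ring
      rcases hw01 n with h | h
      · refine ⟨p * y, ?_⟩
        rw [key, h, ← hy]; push_cast; ring
      · refine ⟨p * y - d * q^(n+1), ?_⟩
        rw [key, h, ← hy]; push_cast; ring
  have hqg : ∀ n, (q:ℚ) * g (n+1) = p * g n - q * w n := by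
    intro n; rw [hrec' n]; field_simp
  have cyc : ∀ k n, ∃ z : ℤ, (d:ℚ) * (q:ℚ)^k * g (n+k) = (d:ℚ) * (p:ℚ)^k * g n - q * z := by
    intro k
    induction k with
    | zero => intro n; exact ⟨0, by simp⟩
    | succ k ih =>
      intro n
      obtain ⟨z, hz⟩ := ih (n+1)
      obtain ⟨zw, hzw⟩ : ∃ zw : ℤ, (zw:ℚ) = (d:ℚ) * (p:ℚ)^k * w n := by
        rcases hw01 n with h|h
        · exact ⟨0, by rw [h]; simp⟩
        · exact ⟨d * p^k, by rw [h]; push_cast; ring⟩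
      refine ⟨q*z + zw, ?_⟩
      have e : n + (k+1) = (n+1) + k := by omega
      rw [e]
      push_cast
      calc (d:ℚ) * (q:ℚ)^(k+1) * g ((n+1)+k) = q * ((d:ℚ) * (q:ℚ)^k * g ((n+1)+k)) := by ring
      _ = q * ((d:ℚ) * (p:ℚ)^k * g (n+1) - q*z) := by rw [hz]
      _ = (d:ℚ) * (p:ℚ)^k * ((q:ℚ) * g (n+1)) - q*(q*z) := by ring
      _ = (d:ℚ) * (p:ℚ)^k * ((p:ℚ) * g n - q * w n) - q*(q*z) := by rw [hqg n]
      _ = (d:ℚ) * (p:ℚ)^(k+1) * g n - (q:ℚ)*((q:ℚ)*z + zw) := by rw [hzw]; ring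
  have cycL : ∀ n, N ≤ n → ∃ z : ℤ, (z:ℚ) = ((p:ℚ)^L - (q:ℚ)^L) * ((d:ℚ) * g n) := by
    intro n hn
    obtain ⟨z, hz⟩ := cyc L n
    rw [hgper n hn] at hz
    exact ⟨q * z, by push_cast; linear_combination hz⟩
  have hcopZ : IsCoprime (p:ℤ) (q:ℤ) := Int.isCoprime_iff_gcd_eq_one.mpr hcop
  have hcyccop : IsCoprime ((q:ℤ)) ((p:ℤ)^L - (q:ℤ)^L) := by
    have h1 : IsCoprime ((q:ℤ)) ((p:ℤ)^L) := hcopZ.symm.pow_right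
    have h2 := h1.add_mul_left_right (-(q:ℤ)^(L-1))
    have e : (p:ℤ)^L + (q:ℤ) * (-(q:ℤ)^(L-1)) = (p:ℤ)^L - (q:ℤ)^L := by
      have e2 : (q:ℤ)^L = (q:ℤ) * (q:ℤ)^(L-1) := by
        conv_lhs => rw [show L = 1 + (L-1) by omega]
        rw [pow_add, pow_one]
      rw [e2]; ring
    rwa [e] at h2
  have intg_ge : ∀ n, N ≤ n → ∃ x : ℤ, (x:ℚ) = (d:ℚ) * g n := by
    intro n hn
    obtain ⟨y, hy⟩ := fwd n
    obtain ⟨z, hz⟩ := cycL n hn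
    refine int_of_coprime_mul ((q:ℤ)^n) ((p:ℤ)^L - (q:ℤ)^L) (hcyccop.pow_left)
      ((d:ℚ) * g n) y z ?_ ?_
    · rw [hy]; push_cast; ring
    · rw [hz]; push_cast; ring
  have down : ∀ n, (∃ x : ℤ, (x:ℚ) = (d:ℚ) * g (n+1)) → (∃ x : ℤ, (x:ℚ) = (d:ℚ) * g n) := by
    rintro n ⟨x, hx⟩
    obtain ⟨y, hy⟩ := fwd n
    obtain ⟨zw, hzw⟩ : ∃ zw : ℤ, (zw:ℚ) = (d:ℚ) * w n := by
      rcases hw01 n with h|h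
      · exact ⟨0, by rw [h]; simp⟩
      · exact ⟨d, by rw [h]; simp⟩
    refine int_of_coprime_mul ((p:ℤ)) ((q:ℤ)^n) (hcopZ.pow_right) ((d:ℚ)*g n)
      (q*x + q*zw) y ?_ ?_
    · push_cast
      linear_combination (q:ℚ)*hx + (q:ℚ)*hzw + (d:ℚ)*(hqg n)
    · rw [hy]; push_cast; ring
  have intg : ∀ n, ∃ x : ℤ, (x:ℚ) = (d:ℚ) * g n := by
    have hdownto : ∀ ι, ∃ x : ℤ, (x:ℚ) = (d:ℚ) * g (N - ι) := by
      intro ι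
      induction ι with
      | zero => simpa using intg_ge N le_rfl
      | succ ι ih =>
        by_cases hι : ι < N
        · have e : N - ι = (N - (ι+1)) + 1 := by omega
          apply down
          rwa [← e]
        · have e : N - (ι+1) = N - ι := by omega
          rwa [e]
    intro n
    rcases le_or_gt N n with h | h
    · exact intg_ge n h
    · have e : n = N - (N - n) := by omega
      rw [e]; exact hdownto (N - n)
  -- bounds
  have hpq1R : (1:ℝ) < (p:ℝ)/q := by rw [lt_div_iff₀ hq0]; linarith
  have hβ1R : ((p:ℝ)/q - 1) ≠ 0 := (by linarith : (0:ℝ) < (p:ℝ)/q - 1).ne'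
  have hmul1 : ((1-γ)⁻¹ * γ) * ((p:ℝ)/q - 1) = 1 := by
    have hpq : (p:ℝ) - q ≠ 0 := (by linarith : (0:ℝ) < (p:ℝ) - q).ne'
    rw [hγdef]
    have h3 : (1 - (q:ℝ)/p) = ((p:ℝ)-q)/p := by field_simp
    rw [h3]
    field_simp
  have hubR : (1-γ)⁻¹ * γ = 1/((p:ℝ)/q - 1) := (eq_div_iff hβ1R).mpr hmul1
  have hub : ∀ n, g n ≤ 1/((p:ℚ)/q - 1) := by
    intro n
    have h1 : (g n : ℝ) ≤ 1/((p:ℝ)/q - 1) := by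
      rw [hgs n, ← hubR]; exact hs_le n
    have h2 : ((1/((p:ℚ)/q - 1) : ℚ) : ℝ) = 1/((p:ℝ)/q - 1) := by push_cast; ring
    rw [← h2] at h1
    exact_mod_cast h1
  have hmain : ∀ n, ∃ x : ℤ, g n = (x:ℚ)/d ∧ 0 ≤ x ∧ (x:ℚ) ≤ (d:ℚ)/((p:ℚ)/q - 1) := by
    intro n
    obtain ⟨x, hx⟩ := intg n
    have hg0n : (0:ℚ) ≤ g n := by
      have : (0:ℝ) ≤ (g n : ℝ) := by rw [hgs n]; exact hs_nonneg n
      exact_mod_cast this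
    refine ⟨x, ?_, ?_, ?_⟩
    · rw [eq_div_iff hd0]; linear_combination -hx
    · have : (0:ℚ) ≤ (x:ℚ) := by rw [hx]; exact mul_nonneg (by positivity) hg0n
      exact_mod_cast this
    · rw [hx]
      calc (d:ℚ) * g n ≤ (d:ℚ) * (1/((p:ℚ)/q - 1)) :=
        mul_le_mul_of_nonneg_left (hub n) (by positivity)
      _ = (d:ℚ)/((p:ℚ)/q - 1) := by rw [mul_one_div]
  -- finiteness and cardinality
  set M := ⌊(d:ℚ)/((p:ℚ)/q - 1)⌋ with hMdef
  have hβ1Q : (0:ℚ) < (p:ℚ)/q - 1 := by linarith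
  have hM0 : 0 ≤ M := Int.floor_nonneg.mpr (by positivity)
  have hmem : ∀ n, g n ∈ ((Finset.Icc (0:ℤ) M).image fun x : ℤ => (x:ℚ)/d) := by
    intro n
    obtain ⟨x, hx1, hx2, hx3⟩ := hmain n
    exact Finset.mem_image.mpr ⟨x, Finset.mem_Icc.mpr ⟨hx2, Int.le_floor.mpr hx3⟩, hx1.symm⟩
  have hcover : Set.range g ⊆ ↑((Finset.Icc (0:ℤ) M).image fun x : ℤ => (x:ℚ)/d) := by
    rintro y ⟨n, rfl⟩; exact hmem n
  have hfin : (Set.range g).Finite := Set.Finite.subset (Finset.finite_toSet _) hcover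
  have hcard : (Set.range g).ncard ≤ M.toNat + 1 := by
    have h1 := Set.ncard_le_ncard hcover (Finset.finite_toSet _)
    rw [Set.ncard_coe_finset] at h1
    have h2 := Finset.card_image_le (s := Finset.Icc (0:ℤ) M) (f := fun x : ℤ => (x:ℚ)/d)
    have h3 : (Finset.Icc (0:ℤ) M).card = (M+1).toNat := by rw [Int.card_Icc]; ring_nf
    omega
  -- pigeonhole
  have hMd : M.toNat + 1 ≤ d := by
    have hlt : M < (d:ℤ) := by
      apply Int.floor_lt.mpr
      push_cast
      apply div_lt_self (by exact_mod_cast hd) (by linarith)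
    omega
  have hpig : ∃ i j : ℕ, i < j ∧ j ≤ d ∧ g i = g j := by
    have hclt : ((Finset.Icc (0:ℤ) M).image fun x : ℤ => (x:ℚ)/d).card
        < (Finset.range (d+1)).card := by
      rw [Finset.card_range]
      have h2 := Finset.card_image_le (s := Finset.Icc (0:ℤ) M) (f := fun x : ℤ => (x:ℚ)/d)
      have h3 : (Finset.Icc (0:ℤ) M).card = (M+1).toNat := by rw [Int.card_Icc]; ring_nf
      omega
    obtain ⟨a, ha, b, hb, hab, he⟩ :=
      Finset.exists_ne_map_eq_of_card_lt_of_maps_to hclt (fun n _ => hmem n)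
    rcases lt_or_gt_of_ne hab with h|h
    · exact ⟨a, b, h, by have := Finset.mem_range.mp hb; omega, he⟩
    · exact ⟨b, a, h, by have := Finset.mem_range.mp ha; omega, he.symm⟩
  obtain ⟨i, j, hij, hjd, hgij⟩ := hpig
  set k := j - i with hkdef
  have hk0 : 0 < k := by omega
  have hper2 : ∀ τ, g (i + τ + k) = g (i + τ) := by
    intro τ
    induction τ with
    | zero =>
      have e : i + 0 + k = j := by omega
      have e2 : i + 0 = i := by omega
      rw [e, e2]; exact hgij.symm
    | succ τ ih =>
      have e : i + (τ+1) + k = (i + τ + k) + 1 := by omega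
      have e2 : i + (τ+1) = (i + τ) + 1 := by omega
      rw [e, e2, hrec, hrec, ih]
  have hgmod : ∀ τ, g (i + τ) = g (i + τ % k) := by
    intro τ
    induction τ using Nat.strong_induction_on with
    | _ τ ih =>
      by_cases hτ : τ < k
      · rw [Nat.mod_eq_of_lt hτ]
      · have e : i + τ = i + (τ - k) + k := by omega
        rw [e, hper2 (τ - k), ih (τ - k) (by omega)]
        congr 1
        rw [Nat.mod_eq_sub_mod (not_lt.mp hτ)]
  set m : ℕ → ℚ := fun n => if 1 ≤ ((p:ℚ)/q) * g n then 1 else 0 with hmdef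
  have hm01 : ∀ n, m n = 0 ∨ m n = 1 := by
    intro n
    rw [hmdef]
    simp only []
    split
    · right; rfl
    · left; rfl
  have hmw : ∀ n, m n = w n := fun n => hdig n
  have hmdep : ∀ a b : ℕ, g a = g b → m a = m b := by
    intro a b h
    rw [hmdef]
    simp only []
    rw [h]
  set u' : List ℚ := (List.range i).map m with hu'def
  set v' : List ℚ := (List.range k).map (fun τ => m (i + τ)) with hv'def
  have hlenu : u'.length = i := by rw [hu'def]; simp
  have hlenv : v'.length = k := by rw [hv'def]; simp
  have hword : ∀ n, upWordQ u' v' n = m n := by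
    intro n
    show (if n < u'.length then u'.getD n 0 else v'.getD ((n - u'.length) % v'.length) 0) = m n
    rw [hlenu, hlenv]
    by_cases hn : n < i
    · rw [if_pos hn]
      have hn' : n < ((List.range i).map m).length := by simpa using hn
      rw [hu'def, List.getD_eq_getElem _ _ hn']
      simp
    · rw [if_neg hn]
      have hlt : (n - i) % k < ((List.range k).map (fun τ => m (i + τ))).length := by
        simpa using Nat.mod_lt _ hk0
      rw [hv'def, List.getD_eq_getElem _ _ hlt]
      simp only [List.getElem_map, List.getElem_range]
      apply hmdep
      have h1 : g n = g (i + (n - i)) := by congr 1; omega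
      exact ((h1.trans (hgmod (n - i)))).symm
  refine ⟨hmain, hfin, hcard, u', v', ?_, ?_, ?_, ?_, ?_⟩
  · intro a ha
    rw [hu'def] at ha
    obtain ⟨τ, _, rfl⟩ := List.mem_map.mp ha
    exact hm01 τ
  · intro a ha
    rw [hv'def] at ha
    obtain ⟨τ, _, rfl⟩ := List.mem_map.mp ha
    exact hm01 (i + τ)
  · intro hcon
    rw [hcon] at hlenv
    simp at hlenv
    omega
  · rw [hlenu, hlenv]; omega
  · calc ∑' n : ℕ, (upWordQ u' v' n : ℝ) * ((q:ℝ)/p)^(n+1)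
        = ∑' n : ℕ, (w n : ℝ) * ((q:ℝ)/p)^(n+1) := by
          apply tsum_congr; intro n; rw [hword n, hmw n]
    _ = (t:ℝ) := htsum
end

section
/- Let 0 < λ < 1 and let a₁ = 0 < a₂ < … < a_k be natural numbers. Then every real t ∈ [0, λ·a_k/(1−λ)] has a representation t = ∑_{i=1}^∞ w(i)·λ^i with w(i) ∈ {a₁,…,a_k} for all i, if and only if for every j ∈ {1,…,k−1}, a_{j+1} − a_j ≤ λ·a_k/(1−λ). -/
/-!
Write `M = λ a_k / (1 - λ)`. If every `x ∈ [0, M]` admits a digit `d` with `x / λ - d ∈ [0, M]`,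
iterating `x ↦ x / λ - d` from `t` yields digits whose `n`-th partial sum differs from `t` by
`λ ^ n` times a remainder in `[0, M]`. The largest digit not exceeding `x / λ` is such a `d`
exactly when the gaps are at most `M`. Conversely, an expansion with first digit `c` has value in
`[λ c, λ (c + M)]`, so a gap `a_{j+1} - a_j > M` leaves every value strictly between
`λ (a_j + M)` and `λ a_{j+1}` without an expansion.
-/

open Finset Filter Set Topology

namespace DigitExpansion

variable {l : ℝ}

theorem hasSum_mul_pow_succ (A : ℝ) (h0 : 0 ≤ l) (h1 : l < 1) :
    HasSum (fun i : ℕ => A * l ^ (i + 1)) (l * A / (1 - l)) := by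
  have hterm : (fun i : ℕ => A * l ^ (i + 1)) = fun i => A * l * l ^ i := by
    funext i; ring
  rw [hterm, show l * A / (1 - l) = A * l * (1 - l)⁻¹ by ring]
  exact (hasSum_geometric_of_lt_one h0 h1).mul_left (A * l)

theorem summable_mul_pow_succ {w : ℕ → ℝ} {A : ℝ} (h0 : 0 ≤ l) (h1 : l < 1)
    (hw : ∀ i, w i ∈ Icc 0 A) : Summable fun i => w i * l ^ (i + 1) :=
  (hasSum_mul_pow_succ A h0 h1).summable.of_nonneg_of_le
    (fun i => mul_nonneg (hw i).1 (by positivity))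
    (fun i => mul_le_mul_of_nonneg_right (hw i).2 (by positivity))

theorem mem_Icc_of_hasSum_mul_pow_succ {w : ℕ → ℝ} {A s : ℝ} (h0 : 0 ≤ l) (h1 : l < 1)
    (hw : ∀ i, w i ∈ Icc 0 A) (hs : HasSum (fun i => w i * l ^ (i + 1)) s) :
    s ∈ Icc (w 0 * l) (w 0 * l + l * (l * A / (1 - l))) := by
  have hnonneg : ∀ i, 0 ≤ w i * l ^ (i + 1) := fun i => mul_nonneg (hw i).1 (by positivity)
  refine ⟨by simpa using le_hasSum hs 0 fun i _ => hnonneg i, ?_⟩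
  have htail := (hasSum_nat_add_iff' 1).mpr hs
  have hbound := hasSum_le (fun i => ?_) htail ((hasSum_mul_pow_succ A h0 h1).mul_left l)
  · simp only [Finset.sum_range_one, zero_add, pow_one] at hbound
    linarith
  · calc w (i + 1) * l ^ (i + 1 + 1) = l * (w (i + 1) * l ^ (i + 1)) := by ring
      _ ≤ l * (A * l ^ (i + 1)) := by gcongr; exact (hw _).2

theorem notMem_Ioo_of_hasSum_mul_pow_succ {w : ℕ → ℝ} {A c c' s : ℝ} (h0 : 0 ≤ l) (h1 : l < 1)
    (hw : ∀ i, w i ∈ Icc 0 A) (hw0 : w 0 ≤ c ∨ c' ≤ w 0)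
    (hs : HasSum (fun i => w i * l ^ (i + 1)) s) :
    s ∉ Ioo (l * (c + l * A / (1 - l))) (l * c') := by
  rintro ⟨hlow, hhigh⟩
  have hs' := mem_Icc_of_hasSum_mul_pow_succ h0 h1 hw hs
  rcases hw0 with hw0 | hw0
  · nlinarith [hs'.2]
  · nlinarith [hs'.1]

theorem exists_hasSum_mul_pow_succ {ι : Type*} (d : ι → ℝ) (hd : ∀ j, 0 ≤ d j) {M t : ℝ}
    (h0 : 0 < l) (h1 : l < 1) (hstep : ∀ x ∈ Icc 0 M, ∃ j, x / l - d j ∈ Icc 0 M)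
    (ht : t ∈ Icc 0 M) : ∃ w : ℕ → ι, HasSum (fun i => d (w i) * l ^ (i + 1)) t := by
  choose digit hdigit using fun x : Icc 0 M => hstep x x.2
  let rem : ℕ → Icc 0 M := fun n => (fun x => ⟨x / l - d (digit x), hdigit x⟩)^[n] ⟨t, ht⟩
  have hrem : ∀ n, (rem (n + 1) : ℝ) = rem n / l - d (digit (rem n)) := fun n => by
    simp only [rem, Function.iterate_succ_apply']
  refine ⟨fun i => digit (rem i), ?_⟩
  have hpartial : ∀ n, ∑ i ∈ range n, d (digit (rem i)) * l ^ (i + 1) = t - l ^ n * rem n := by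
    intro n
    induction n with
    | zero => simp [rem]
    | succ n ih =>
      rw [sum_range_succ, ih, hrem]
      field_simp
      ring
  have hvanish : Tendsto (fun n => l ^ n * (rem n : ℝ)) atTop (𝓝 0) := by
    refine squeeze_zero (fun n => mul_nonneg (by positivity) (rem n).2.1)
      (fun n => mul_le_mul_of_nonneg_left (rem n).2.2 (by positivity)) ?_
    simpa using (tendsto_pow_atTop_nhds_zero_of_lt_one h0.le h1).mul_const M
  rw [hasSum_iff_tendsto_nat_of_nonneg (fun i => mul_nonneg (hd _) (by positivity))]
  simpa [hpartial] using tendsto_const_nhds.sub hvanish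

theorem exists_sub_mem_Icc_of_gap {k : ℕ} {d : Fin (k + 1) → ℝ} (hd0 : d 0 ≤ 0)
    (h0 : 0 < l) (h1 : l < 1)
    (hgap : ∀ j : Fin k, d j.succ - d j.castSucc ≤ l * d (Fin.last k) / (1 - l)) {x : ℝ}
    (hx : x ∈ Icc 0 (l * d (Fin.last k) / (1 - l))) :
    ∃ j, x / l - d j ∈ Icc 0 (l * d (Fin.last k) / (1 - l)) := by
  have hl : 0 < 1 - l := by linarith
  have hy : 0 ≤ x / l := div_nonneg hx.1 h0.le
  -- greedy choice: the largest index whose digit does not exceed `x / l`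
  obtain ⟨j, hj, hjmax⟩ := (univ.filter fun j => d j ≤ x / l).exists_max_image id
    ⟨0, by simpa using hd0.trans hy⟩
  simp only [mem_filter, Finset.mem_univ, true_and, id] at hj hjmax
  refine ⟨j, sub_nonneg.2 hj, ?_⟩
  rcases Fin.eq_castSucc_or_eq_last j with ⟨i, rfl⟩ | rfl
  · have hnext : x / l < d i.succ := by
      by_contra! h
      exact (Fin.castSucc_lt_succ (i := i)).not_ge (hjmax _ h)
    linarith [hgap i]
  · have hxl : x / l ≤ d (Fin.last k) / (1 - l) := by
      rw [div_le_div_iff₀ h0 hl]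
      linarith [(le_div_iff₀ hl).1 hx.2]
    have hM : d (Fin.last k) / (1 - l) - d (Fin.last k) = l * d (Fin.last k) / (1 - l) := by
      field_simp; ring
    linarith

theorem sub_le_of_forall_exists_hasSum {k : ℕ} {d : Fin (k + 1) → ℝ} (hmono : StrictMono d)
    (hd0 : 0 ≤ d 0) (h0 : 0 < l) (h1 : l < 1)
    (hrep : ∀ t ∈ Icc 0 (l * d (Fin.last k) / (1 - l)),
      ∃ w : ℕ → Fin (k + 1), HasSum (fun i => d (w i) * l ^ (i + 1)) t) (j : Fin k) :
    d j.succ - d j.castSucc ≤ l * d (Fin.last k) / (1 - l) := by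
  set A := d (Fin.last k)
  have hdigit : ∀ j, d j ∈ Icc 0 A :=
    fun j => ⟨hd0.trans (hmono.monotone (Fin.zero_le j)), hmono.monotone (Fin.le_last j)⟩
  have hlA : l * A ≤ l * A / (1 - l) :=
    le_div_self (mul_nonneg h0.le (hdigit _).1) (by linarith) (by linarith)
  by_contra! hgap
  set t := l * (d j.castSucc + l * A / (1 - l) + d j.succ) / 2 with ht_def
  have hscaled := mul_lt_mul_of_pos_left hgap h0
  have ht : t ∈ Ioo (l * (d j.castSucc + l * A / (1 - l))) (l * d j.succ) :=
    ⟨by linarith, by linarith⟩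
  have ht0 : 0 ≤ t := by
    have hM0 : 0 ≤ l * A / (1 - l) := (mul_nonneg h0.le (hdigit _).1).trans hlA
    linarith [ht.1, mul_nonneg h0.le (hdigit j.castSucc).1, mul_nonneg h0.le hM0]
  obtain ⟨w, hw⟩ := hrep t ⟨ht0, by nlinarith [(hdigit j.succ).2, ht.2]⟩
  have hw0 : d (w 0) ≤ d j.castSucc ∨ d j.succ ≤ d (w 0) :=
    (le_or_gt (w 0) j.castSucc).imp (hmono.monotone ·)
      (fun h => hmono.monotone (Fin.castSucc_lt_iff_succ_le.1 h))
  exact notMem_Ioo_of_hasSum_mul_pow_succ h0.le h1 (fun i => hdigit (w i)) hw0 hw ht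

end DigitExpansion

open DigitExpansion in
/-- With digits a₀ = 0 < a₁ < … < a_k, every t ∈ [0, λ·a_k/(1-λ)] is representable as
∑_{i≥1} w(i)·λ^i with digits among the a_j iff consecutive digit gaps are at most
λ·a_k/(1-λ). -/
theorem gtds_full_interval (l : ℝ) (h0 : 0 < l) (h1 : l < 1)
    (k : ℕ) (a : Fin (k + 1) → ℕ) (ha0 : a 0 = 0) (hmono : StrictMono a) :
    (∀ t : ℝ, 0 ≤ t → t ≤ l * (a (Fin.last k)) / (1 - l) →
      ∃ w : ℕ → ℕ, (∀ i, ∃ j, w i = a j) ∧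
        ∑' i : ℕ, (w i : ℝ) * l ^ (i + 1) = t) ↔
    (∀ j : Fin k, ((a j.succ : ℝ) - (a j.castSucc : ℝ)) ≤ l * (a (Fin.last k)) / (1 - l)) := by
  have hdigit : ∀ j, (a j : ℝ) ∈ Icc 0 (a (Fin.last k) : ℝ) :=
    fun j => ⟨Nat.cast_nonneg _, Nat.cast_le.2 (hmono.monotone (Fin.le_last j))⟩
  constructor
  · intro hrep
    refine sub_le_of_forall_exists_hasSum (Nat.strictMono_cast.comp hmono) (by simp) h0 h1
      fun t ht => ?_
    obtain ⟨w, hw, hsum⟩ := hrep t ht.1 ht.2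
    choose idx hidx using hw
    have hw' : ∀ i, (w i : ℝ) ∈ Icc 0 (a (Fin.last k) : ℝ) := fun i => hidx i ▸ hdigit _
    refine ⟨idx, ?_⟩
    simpa only [Function.comp_apply, ← hidx] using
      hsum ▸ (summable_mul_pow_succ h0.le h1 hw').hasSum
  · intro hgap t ht0 htM
    obtain ⟨w, hw⟩ := exists_hasSum_mul_pow_succ (fun j => (a j : ℝ)) (fun j => (hdigit j).1)
      h0 h1 (fun x hx => exists_sub_mem_Icc_of_gap (by simp [ha0]) h0 h1 hgap hx) ⟨ht0, htM⟩
    exact ⟨fun i => a (w i), fun i => ⟨w i, rfl⟩, hw.tsum_eq⟩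
end
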